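/- Let D be a complex-linear operator on a finite-dimensional complex inner product space H, and suppose there exists an antilinear map C : H → H with C² = −1 such that C commutes with D (i.e., C∘D = D∘C). Then every eigenspace of D has even complex dimension. -/

import Mathlib

/-- Kramers degeneracy: Let `D` be a complex-linear operator on a
finite-dimensional complex inner product space `H`, and suppose there is an antilinear map
`C : H → H` with `C² = −1` commuting with `D`.  Then (with `D` having real spectrum, so
every eigenspace is `C`-invariant) every eigenspace of `D` has even complex dimension. -/
theorem eigenspace_even_dim_of_antilinear_symmetry
    {H : Type*} [NormedAddCommGroup H] [InnerProductSpace ℂ H] [FiniteDimensional ℂ H]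
    (D : H →ₗ[ℂ] H)
    (C : H →ₗ⋆[ℂ] H)
    (hC2 : ∀ x : H, C (C x) = -x)
    (hcomm : ∀ x : H, C (D x) = D (C x))
    (hreal : ∀ μ : ℂ, Module.End.HasEigenvalue D μ → μ.im = 0) :
    ∀ μ : ℂ, Even (Module.finrank ℂ (Module.End.eigenspace D μ)) := by
  intro μ
  by_cases hμ : Module.End.HasEigenvalue D μ
  · have hconj : (starRingEnd ℂ) μ = μ := Complex.conj_eq_iff_im.mpr (hreal μ hμ)
    set E := Module.End.eigenspace D μ with hE
    have hmem : ∀ v : H, v ∈ E → C v ∈ E := by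
      intro v hv
      rw [hE, Module.End.mem_eigenspace_iff] at hv ⊢
      rw [← hcomm, hv, map_smulₛₗ, hconj]
    set n := Module.finrank ℂ E with hn
    let b : Module.Basis (Fin n) ℂ E := Module.finBasis ℂ E
    let Cb : Fin n → E := fun j => ⟨C (b j : H), hmem _ (b j).2⟩
    let M : Matrix (Fin n) (Fin n) ℂ := fun i j => b.repr (Cb j) i
    have hCb : ∀ j, C ((b j : E) : H) = ((∑ i, M i j • b i : E) : H) := by
      intro j
      have h : (∑ i, M i j • b i : E) = Cb j := b.sum_repr (Cb j)
      rw [h]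
    have hMM : M * M.map (starRingEnd ℂ) = -1 := by
      have key : ∀ j, (∑ k, (starRingEnd ℂ) (M k j) • ∑ i, M i k • b i : E) = -(b j) := by
        intro j
        apply Subtype.coe_injective
        push_cast
        have h1 : C (C ((b j : E) : H)) = -((b j : E) : H) := hC2 _
        rw [hCb j] at h1
        rw [← h1]
        rw [show (((∑ i, M i j • b i : E) : E) : H) = ∑ i, M i j • ((b i : E) : H) by
          push_cast; ring_nf]
        rw [map_sum]
        congr 1
        ext k
        rw [map_smulₛₗ, hCb k]
        push_cast
        rfl
      ext i j
      have := congrArg (fun x : E => b.repr x i) (key j)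
      simp only [map_sum, map_smul, map_neg, Module.Basis.repr_self, Finsupp.finset_sum_apply,
        Finsupp.smul_apply, Finsupp.single_apply, Finsupp.neg_apply, smul_eq_mul] at this
      simp only [mul_ite, mul_one, mul_zero, Finset.sum_ite_eq', Finset.mem_univ,
        if_true] at this
      simp only [Matrix.mul_apply, Matrix.map_apply, Matrix.neg_apply, Matrix.one_apply]
      rw [show (if i = j then (1:ℂ) else 0) = if j = i then 1 else 0 by
        simp [eq_comm], ← this]
      exact Finset.sum_congr rfl fun k _ => mul_comm _ _
    have hdet : M.det * (starRingEnd ℂ) M.det = (-1 : ℂ) ^ n := by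
      have := congrArg Matrix.det hMM
      rw [Matrix.det_mul] at this
      rw [show M.map ⇑(starRingEnd ℂ) = (starRingEnd ℂ).mapMatrix M from rfl,
        ← RingHom.map_det] at this
      rw [this, Matrix.det_neg, Matrix.det_one, mul_one, Fintype.card_fin]
    rcases Nat.even_or_odd n with he | ho
    · exact he
    · exfalso
      rw [Complex.mul_conj, ho.neg_one_pow] at hdet
      have : (Complex.normSq M.det : ℝ) = -1 := by
        exact_mod_cast hdet
      linarith [Complex.normSq_nonneg M.det]
  · have hbot : Module.End.eigenspace D μ = ⊥ := not_not.mp hμ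
    rw [hbot]
    simp
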